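/- arXiv:math/9809176 — 2 statements merged into one kernel-verified Lean document; each statement's English description precedes it below -/
import Mathlib

section
/- (Idempotence of extension operators.) For every dimension d ≥ 1, every direction δ ∈ Fin d, and every finite set P of d-dimensional bricks, Ext_δ(Ext_δ(P)) = Ext_δ(P). -/
open scoped Classical

noncomputable section

/-- The (integer-valued) indicator function of the half-open box
`∏ i, [w i, w i + b i)` in `ℝ^d`, i.e. of the translate by `w` of the brick `b`. -/
def brickInd {d : ℕ} (b : Fin d → ℕ) (w : Fin d → ℝ) (y : Fin d → ℝ) : ℤ :=
  if ∀ i, w i ≤ y i ∧ y i < w i + (b i : ℝ) then 1 else 0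

/-- `t` is tilable by the protoset `P`: the indicator function of `t` is an
integer-linear combination of indicator functions of translates of members of `P`. -/
def Tilable {d : ℕ} (P : Set (Fin d → ℕ)) (t : Fin d → ℕ) : Prop :=
  ∃ (m : ℕ) (p : Fin m → (Fin d → ℕ)) (w : Fin m → (Fin d → ℝ)) (γ : Fin m → ℤ),
    (∀ j, p j ∈ P) ∧
      ∀ y : Fin d → ℝ, brickInd t (fun _ => 0) y = ∑ j, γ j * brickInd (p j) (w j) y

/-- `t` is packable by the protoset `P`: as for tilability but with all coefficients 1. -/
def Packable {d : ℕ} (P : Set (Fin d → ℕ)) (t : Fin d → ℕ) : Prop :=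
  ∃ (m : ℕ) (p : Fin m → (Fin d → ℕ)) (w : Fin m → (Fin d → ℝ)),
    (∀ j, p j ∈ P) ∧
      ∀ y : Fin d → ℝ, brickInd t (fun _ => 0) y = ∑ j, brickInd (p j) (w j) y

/-- The divisibility partial order on bricks: `b ⪯ t` iff each sidelength of `b`
divides the corresponding sidelength of `t`. -/
def BrickLE {d : ℕ} (b t : Fin d → ℕ) : Prop := ∀ i, b i ∣ t i

/-- The set of `⪯`-minimal elements of a set of bricks. -/
def MinOf {d : ℕ} (S : Set (Fin d → ℕ)) : Set (Fin d → ℕ) :=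
  {t ∈ S | ∀ s ∈ S, BrickLE s t → s = t}

/-- `M(P)`: the set of `⪯`-minimal bricks among the bricks tilable by `P`. -/
def MSet {d : ℕ} (P : Set (Fin d → ℕ)) : Set (Fin d → ℕ) :=
  MinOf {t | (∀ i, 0 < t i) ∧ Tilable P t}

/-- `rank(P) = card M(P)`. -/
def brickRank {d : ℕ} (P : Set (Fin d → ℕ)) : ℕ := (MSet P).ncard

/-- `comb_δ(A)`: gcd of the `δ`-th sidelengths, lcm of the others. -/
def combN {d : ℕ} (δ : Fin d) (A : Finset (Fin d → ℕ)) : Fin d → ℕ :=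
  fun j => if j = δ then A.gcd (fun b => b δ) else A.lcm (fun b => b j)

/-- `Ext_δ(Q) = { comb_δ(A) : A a nonempty (finite) subset of Q }`. -/
def ExtN {d : ℕ} (δ : Fin d) (Q : Set (Fin d → ℕ)) : Set (Fin d → ℕ) :=
  {b | ∃ A : Finset (Fin d → ℕ), A.Nonempty ∧ ↑A ⊆ Q ∧ b = combN δ A}

/-- `Ext_{1..d}(Q) = Ext_d (Ext_{d-1} (⋯ (Ext_1 Q) ⋯))`. -/
def ExtAllN {d : ℕ} (Q : Set (Fin d → ℕ)) : Set (Fin d → ℕ) :=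
  (List.finRange d).foldl (fun S δ => ExtN δ S) Q

/-!
Since gcd and lcm are associative, `comb_δ` of the bricks `comb_δ(A_x)`, `x ∈ B`, is
`comb_δ` of the union of the `A_x`. So every element of `Ext_δ(Ext_δ(Q))` already lies in
`Ext_δ(Q)`; the converse inclusion holds because `comb_δ {b} = b`.
-/

namespace Finset

variable {α β ι : Type*} [CommMonoidWithZero α] [NormalizedGCDMonoid α] [DecidableEq β]

theorem gcd_biUnion (s : Finset ι) (t : ι → Finset β) (f : β → α) :
    (s.biUnion t).gcd f = s.gcd fun i => (t i).gcd f := by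
  induction s using Finset.induction_on with
  | empty => simp
  | insert i s _ ih => rw [biUnion_insert, gcd_union, gcd_insert, ih]

theorem lcm_biUnion (s : Finset ι) (t : ι → Finset β) (f : β → α) :
    (s.biUnion t).lcm f = s.lcm fun i => (t i).lcm f := by
  induction s using Finset.induction_on with
  | empty => simp
  | insert i s _ ih => rw [biUnion_insert, lcm_union, lcm_insert, ih]

end Finset

section Extension

variable {d : ℕ} (δ : Fin d)

theorem combN_singleton (b : Fin d → ℕ) : combN δ {b} = b := by
  funext j
  by_cases hj : j = δ <;> simp [combN, hj]

theorem subset_extN (Q : Set (Fin d → ℕ)) : Q ⊆ ExtN δ Q := fun b hb =>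
  ⟨{b}, Finset.singleton_nonempty b, by simpa using hb, (combN_singleton δ b).symm⟩

theorem combN_biUnion {ι : Type*} (s : Finset ι) (A : ι → Finset (Fin d → ℕ)) :
    combN δ (s.biUnion A) = combN δ (s.image fun i => combN δ (A i)) := by
  funext j
  by_cases hj : j = δ
  · subst hj
    simp only [combN, if_true, Finset.gcd_biUnion, Finset.gcd_image, Function.comp_def]
  · simp only [combN, hj, if_false, Finset.lcm_biUnion, Finset.lcm_image, Function.comp_def]

theorem extN_extN_subset (Q : Set (Fin d → ℕ)) : ExtN δ (ExtN δ Q) ⊆ ExtN δ Q := by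
  rintro _ ⟨B, hBne, hBQ, rfl⟩
  have hB : ∀ x ∈ B, ∃ A : Finset (Fin d → ℕ), A.Nonempty ∧ ↑A ⊆ Q ∧ x = combN δ A :=
    fun x hx => hBQ hx
  choose! A hAne hAQ hAcomb using hB
  have hB_image : B.image (fun x => combN δ (A x)) = B := by
    rw [Finset.image_congr fun x hx => (hAcomb x hx).symm, Finset.image_id']
  refine ⟨B.biUnion A, hBne.biUnion hAne, ?_, ?_⟩
  · simpa using hAQ
  · rw [combN_biUnion, hB_image]

theorem extN_extN (Q : Set (Fin d → ℕ)) : ExtN δ (ExtN δ Q) = ExtN δ Q :=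
  (extN_extN_subset δ Q).antisymm (subset_extN δ (ExtN δ Q))

end Extension

theorem statement16_general {d : ℕ} (δ : Fin d) (P : Finset (Fin d → ℕ)) :
    ExtN δ (ExtN δ (↑P : Set (Fin d → ℕ))) = ExtN δ (↑P : Set (Fin d → ℕ)) :=
  extN_extN δ ↑P

/-- Idempotence of extension operators: for every dimension `d ≥ 1`,
every direction `δ`, and every finite set `P` of `d`-dimensional bricks,
`Ext_δ(Ext_δ(P)) = Ext_δ(P)`. -/
theorem statement16 {d : ℕ} (hd : 1 ≤ d) (δ : Fin d) (P : Finset (Fin d → ℕ))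
    (hpos : ∀ b ∈ P, ∀ k, 0 < b k) :
    ExtN δ (ExtN δ (↑P : Set (Fin d → ℕ))) = ExtN δ (↑P : Set (Fin d → ℕ)) :=
  statement16_general δ P
end
end

section
/- (Combine Lemma.) For every dimension d ≥ 1, every nonempty finite set A of d-dimensional bricks, and every direction δ ∈ Fin d, the brick comb_δ(A) is tilable by A. -/
open scoped Classical

noncomputable section

def oneInd (a : ℕ) (w y : ℝ) : ℤ := if w ≤ y ∧ y < w + (a : ℝ) then 1 else 0

lemma brickInd_eq_prod {d : ℕ} (b : Fin d → ℕ) (w y : Fin d → ℝ) :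
    brickInd b w y = ∏ i, oneInd (b i) (w i) (y i) := by
  unfold brickInd oneInd
  rw [Finset.prod_boole]
  simp

lemma oneInd_zero (c y : ℝ) : oneInd 0 c y = 0 := by
  unfold oneInd
  split_ifs with h
  · push_cast at h; linarith [h.1, h.2]
  · rfl

lemma oneInd_add (a b : ℕ) (c y : ℝ) :
    oneInd (a + b) c y = oneInd a c y + oneInd b (c + (a : ℝ)) y := by
  unfold oneInd
  push_cast
  rcases le_or_gt c y with hc | hc
  · rcases lt_or_ge y (c + a) with h | h
    · rw [if_pos ⟨hc, by linarith⟩, if_pos ⟨hc, h⟩,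
        if_neg (by push_neg; intro h2; linarith), add_zero]
    · rcases lt_or_ge y (c + a + b) with h2 | h2
      · rw [if_pos ⟨hc, by linarith⟩, if_neg (by push_neg; intro h3; linarith),
          if_pos ⟨h, by linarith⟩]
        norm_num
      · rw [if_neg (by push_neg; intro h3; linarith), if_neg (by push_neg; intro h3; linarith),
          if_neg (by push_neg; intro h3; linarith)]
        norm_num
  · rw [if_neg (by push_neg; intro h3; linarith), if_neg (by push_neg; intro h3; linarith),
      if_neg (by push_neg; intro h3; linarith)]
    norm_num

lemma oneInd_mul (a q : ℕ) (c y : ℝ) :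
    oneInd (a * q) c y = ∑ k : Fin q, oneInd a (c + (k : ℕ) * (a : ℝ)) y := by
  induction q with
  | zero => simpa using oneInd_zero c y
  | succ n ih =>
      rw [Nat.mul_succ, oneInd_add, ih, Fin.sum_univ_castSucc]
      congr 1
      all_goals first
        | (exact Finset.sum_congr rfl fun k _ => by norm_num)
        | (push_cast; ring_nf)

lemma oneInd_dvd (a n : ℕ) (h : a ∣ n) (c y : ℝ) :
    oneInd n c y = ∑ k : Fin (n / a), oneInd a (c + (k : ℕ) * (a : ℝ)) y := by
  conv_lhs => rw [← Nat.mul_div_cancel' h]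
  exact oneInd_mul a (n / a) c y

lemma grid_tile {d : ℕ} (b t : Fin d → ℕ) (h : ∀ i, b i ∣ t i) (w y : Fin d → ℝ) :
    brickInd t w y =
      ∑ κ ∈ Fintype.piFinset (fun i => (Finset.univ : Finset (Fin (t i / b i)))),
        brickInd b (fun i => w i + (κ i : ℕ) * (b i : ℝ)) y := by
  rw [brickInd_eq_prod]
  have h1 : ∀ i ∈ Finset.univ, oneInd (t i) (w i) (y i) =
      ∑ k : Fin (t i / b i), oneInd (b i) (w i + (k : ℕ) * (b i : ℝ)) (y i) :=
    fun i _ => oneInd_dvd (b i) (t i) (h i) (w i) (y i)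
  rw [Finset.prod_congr rfl h1, Finset.prod_univ_sum]
  exact Finset.sum_congr rfl fun κ _ => (brickInd_eq_prod b _ y).symm

/-- 1D decomposability (with arbitrary base offset) of length `n` by the `δ`-lengths of `A`. -/
def D1 {d : ℕ} (A : Finset (Fin d → ℕ)) (δ : Fin d) (n : ℕ) : Prop :=
  ∃ (m : ℕ) (p : Fin m → (Fin d → ℕ)) (w : Fin m → ℝ) (γ : Fin m → ℤ),
    (∀ j, p j ∈ A) ∧ ∀ c y : ℝ, oneInd n c y = ∑ j, γ j * oneInd (p j δ) (c + w j) y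

variable {d : ℕ} {A : Finset (Fin d → ℕ)} {δ : Fin d}

lemma D1_zero : D1 A δ 0 := by
  refine ⟨0, Fin.elim0, Fin.elim0, Fin.elim0, fun j => j.elim0, fun c y => ?_⟩
  simpa using oneInd_zero c y

lemma D1_gen {b : Fin d → ℕ} (hb : b ∈ A) : D1 A δ (b δ) := by
  refine ⟨1, fun _ => b, fun _ => 0, fun _ => 1, fun _ => hb, fun c y => ?_⟩
  simp

lemma D1_add {a b : ℕ} (ha : D1 A δ a) (hb : D1 A δ b) : D1 A δ (a + b) := by
  obtain ⟨m1, p1, w1, γ1, hp1, h1⟩ := ha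
  obtain ⟨m2, p2, w2, γ2, hp2, h2⟩ := hb
  refine ⟨m1 + m2, Fin.append p1 p2, Fin.append w1 (fun j => (a : ℝ) + w2 j),
    Fin.append γ1 γ2, ?_, fun c y => ?_⟩
  · intro j
    cases j using Fin.addCases with
    | left i => rw [Fin.append_left]; exact hp1 i
    | right i => rw [Fin.append_right]; exact hp2 i
  · rw [oneInd_add a b c y, h1 c y, h2 (c + (a : ℝ)) y, Fin.sum_univ_add]
    simp only [Fin.append_left, Fin.append_right, add_assoc]

lemma D1_sub {a b : ℕ} (hab : D1 A δ (a + b)) (hb : D1 A δ b) : D1 A δ a := by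
  obtain ⟨m1, p1, w1, γ1, hp1, h1⟩ := hab
  obtain ⟨m2, p2, w2, γ2, hp2, h2⟩ := hb
  refine ⟨m1 + m2, Fin.append p1 p2, Fin.append w1 (fun j => (a : ℝ) + w2 j),
    Fin.append γ1 (fun j => -γ2 j), ?_, fun c y => ?_⟩
  · intro j
    cases j using Fin.addCases with
    | left i => rw [Fin.append_left]; exact hp1 i
    | right i => rw [Fin.append_right]; exact hp2 i
  · have key : oneInd a c y = oneInd (a + b) c y - oneInd b (c + (a : ℝ)) y := by
      rw [oneInd_add a b c y]; ring
    rw [key, h1 c y, h2 (c + (a : ℝ)) y, Fin.sum_univ_add]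
    simp only [Fin.append_left, Fin.append_right, add_assoc, neg_mul, Finset.sum_neg_distrib]
    ring_nf

lemma D1_nsmul {a : ℕ} (ha : D1 A δ a) (k : ℕ) : D1 A δ (k * a) := by
  induction k with
  | zero => simpa using (D1_zero : D1 A δ 0)
  | succ n ih => rw [Nat.succ_mul]; exact D1_add ih ha

lemma D1_finsum {α : Type*} (s : Finset α) (f : α → ℕ) (h : ∀ x ∈ s, D1 A δ (f x)) :
    D1 A δ (∑ x ∈ s, f x) := by
  classical
  induction s using Finset.induction with
  | empty => simpa using (D1_zero : D1 A δ 0)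
  | insert _ _ hx ih =>
      rw [Finset.sum_insert hx]
      exact D1_add (h _ (Finset.mem_insert_self _ _))
        (ih fun x hxs => h x (Finset.mem_insert_of_mem hxs))

lemma gcd_bezout {α : Type*} (s : Finset α) (f : α → ℕ) :
    ∃ c : α → ℤ, ((s.gcd f : ℕ) : ℤ) = ∑ b ∈ s, c b * (f b : ℤ) := by
  classical
  induction s using Finset.induction with
  | empty => exact ⟨0, by simp⟩
  | @insert a s ha ih =>
      obtain ⟨c, hc⟩ := ih
      refine ⟨fun x => if x = a then Nat.gcdA (f a) (s.gcd f)
        else Nat.gcdB (f a) (s.gcd f) * c x, ?_⟩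
      rw [Finset.gcd_insert, Finset.sum_insert ha]
      beta_reduce
      rw [if_pos rfl]
      have hg : GCDMonoid.gcd (f a) (s.gcd f) = Nat.gcd (f a) (s.gcd f) := rfl
      rw [hg, Nat.gcd_eq_gcd_ab]
      have : ∑ x ∈ s, (if x = a then Nat.gcdA (f a) (s.gcd f)
          else Nat.gcdB (f a) (s.gcd f) * c x) * (f x : ℤ)
          = Nat.gcdB (f a) (s.gcd f) * ∑ x ∈ s, c x * f x := by
        rw [Finset.mul_sum]
        refine Finset.sum_congr rfl fun x hx => ?_
        rw [if_neg (by rintro rfl; exact ha hx)]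
        ring
      rw [this, ← hc]
      ring

lemma D1_gcd : D1 A δ (A.gcd (fun b => b δ)) := by
  obtain ⟨c, hc⟩ := gcd_bezout A (fun b => b δ)
  set g := A.gcd (fun b => b δ) with hg
  set P := ∑ b ∈ A, (c b).toNat * b δ with hP
  set N := ∑ b ∈ A, (-(c b)).toNat * b δ with hN
  have key : (P : ℤ) - N = g := by
    rw [hP, hN]
    push_cast
    rw [← Finset.sum_sub_distrib]
    rw [hc]
    refine Finset.sum_congr rfl fun b _ => ?_
    have := Int.toNat_sub_toNat_neg (c b)
    nlinarith [Int.toNat_sub_toNat_neg (c b)]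
  have hPN : g + N = P := by
    have h2 : (g : ℤ) + N = P := by linarith [key]
    exact_mod_cast h2
  have hDP : D1 A δ P := D1_finsum A _ (fun b hb => D1_nsmul (D1_gen hb) _)
  have hDN : D1 A δ N := D1_finsum A _ (fun b hb => D1_nsmul (D1_gen hb) _)
  exact D1_sub (hPN ▸ hDP) hDN

lemma Tilable_of_fintype {d : ℕ} {P : Set (Fin d → ℕ)} {t : Fin d → ℕ} {ι : Type} [Fintype ι]
    (p : ι → (Fin d → ℕ)) (w : ι → (Fin d → ℝ)) (γ : ι → ℤ)
    (hp : ∀ j, p j ∈ P)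
    (h : ∀ y, brickInd t (fun _ => 0) y = ∑ j, γ j * brickInd (p j) (w j) y) :
    Tilable P t := by
  let e := (Fintype.equivFin ι).symm
  refine ⟨Fintype.card ι, fun k => p (e k), fun k => w (e k), fun k => γ (e k),
    fun k => hp _, fun y => ?_⟩
  rw [h y]
  exact (Fintype.sum_equiv e (fun k => γ (e k) * brickInd (p (e k)) (w (e k)) y)
    (fun j => γ j * brickInd (p j) (w j) y) (fun k => rfl)).symm

/-- Combine Lemma: for every dimension `d ≥ 1`, every nonempty finite set
`A` of `d`-dimensional bricks, and every direction `δ`, the brick `comb_δ(A)` is tilable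
by `A`. -/
theorem statement17 {d : ℕ} (hd : 1 ≤ d) (A : Finset (Fin d → ℕ)) (hA : A.Nonempty)
    (hpos : ∀ b ∈ A, ∀ i, 0 < b i) (δ : Fin d) :
    Tilable (↑A : Set (Fin d → ℕ)) (combN δ A) := by
  classical
  obtain ⟨m, p, w, γ, hp, h1d⟩ := (D1_gcd : D1 A δ (A.gcd fun b => b δ))
  set slab : Fin m → Fin d → ℕ := fun j i => if i = δ then p j δ else combN δ A i with hslab
  set wv : Fin m → Fin d → ℝ := fun j i => if i = δ then w j else 0 with hwv
  have hdvd : ∀ j i, p j i ∣ slab j i := by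
    intro j i
    by_cases hi : i = δ
    · subst hi; simp [hslab]
    · simp only [hslab, if_neg hi, combN, if_neg hi]
      exact Finset.dvd_lcm (hp j)
  have key : ∀ y : Fin d → ℝ, brickInd (combN δ A) (fun _ => 0) y
      = ∑ j, γ j * brickInd (slab j) (wv j) y := by
    intro y
    have hsplitL : brickInd (combN δ A) (fun _ => 0) y
        = oneInd (A.gcd fun b => b δ) 0 (y δ)
          * ∏ i ∈ Finset.univ.erase δ, oneInd (combN δ A i) 0 (y i) := by
      rw [brickInd_eq_prod, ← Finset.mul_prod_erase Finset.univ _ (Finset.mem_univ δ)]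
      congr 1
      simp [combN]
    have hsplitR : ∀ j, brickInd (slab j) (wv j) y
        = oneInd (p j δ) (w j) (y δ)
          * ∏ i ∈ Finset.univ.erase δ, oneInd (combN δ A i) 0 (y i) := by
      intro j
      rw [brickInd_eq_prod, ← Finset.mul_prod_erase Finset.univ _ (Finset.mem_univ δ)]
      congr 1
      · simp [hslab, hwv]
      · refine Finset.prod_congr rfl fun i hi => ?_
        have hne : i ≠ δ := Finset.ne_of_mem_erase hi
        simp [hslab, hwv, hne]
    rw [hsplitL, h1d 0 (y δ), Finset.sum_mul]
    refine Finset.sum_congr rfl fun j _ => ?_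
    rw [hsplitR j, zero_add, mul_assoc]
  have key2 : ∀ y : Fin d → ℝ, brickInd (combN δ A) (fun _ => 0) y
      = ∑ x : Σ j : Fin m, ((i : Fin d) → Fin (slab j i / p j i)),
          γ x.1 * brickInd (p x.1) (fun i => wv x.1 i + ((x.2 i : ℕ) : ℝ) * (p x.1 i : ℝ)) y := by
    intro y
    rw [key y]
    have hgrid : ∀ j, brickInd (slab j) (wv j) y
        = ∑ κ : (i : Fin d) → Fin (slab j i / p j i),
            brickInd (p j) (fun i => wv j i + ((κ i : ℕ) : ℝ) * (p j i : ℝ)) y := by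
      intro j
      rw [grid_tile (p j) (slab j) (hdvd j) (wv j) y, ← Fintype.piFinset_univ]
    calc ∑ j, γ j * brickInd (slab j) (wv j) y
        = ∑ j, ∑ κ : (i : Fin d) → Fin (slab j i / p j i),
            γ j * brickInd (p j) (fun i => wv j i + ((κ i : ℕ) : ℝ) * (p j i : ℝ)) y := by
          refine Finset.sum_congr rfl fun j _ => ?_
          rw [hgrid j, Finset.mul_sum]
      _ = _ := by
          rw [Finset.sum_sigma', Finset.univ_sigma_univ]
  exact Tilable_of_fintype (ι := Σ j : Fin m, ((i : Fin d) → Fin (slab j i / p j i))) (fun x => p x.1)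
    (fun x => fun i => wv x.1 i + ((x.2 i : ℕ) : ℝ) * (p x.1 i : ℝ))
    (fun x => γ x.1) (fun x => Finset.mem_coe.mpr (hp x.1)) key2
end
end
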